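/- arXiv:1610.03561 — 6 statements merged into one kernel-verified Lean document; each statement's English description precedes it below -/
import Mathlib

section
/- (Acyclicity of a tensor product is detected on the factors; this is the key step showing that the subcategory of p_k-acyclic modules is a prime ideal.) Let V and W be vector spaces over 𝔽₂, equipped with 𝔽₂-linear endomorphisms d_V : V → V and d_W : W → W satisfying d_V ∘ d_V = 0 and d_W ∘ d_W = 0, and let D := d_V ⊗ id_W + id_V ⊗ d_W on V ⊗_{𝔽₂} W. Then H(V ⊗_{𝔽₂} W, D) = 0 if and only if H(V, d_V) = 0 or H(W, d_W) = 0. -/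
/-- The Margolis homology of an `𝔽₂`-linear endomorphism `d` (with `d ∘ d = 0`):
the quotient `ker d / range d`. -/
abbrev Margolis {V : Type*} [AddCommGroup V] [Module (ZMod 2) V]
    (d : V →ₗ[ZMod 2] V) : Type _ :=
  LinearMap.ker d ⧸ (LinearMap.range d).comap (LinearMap.ker d).subtype

/-!
Both directions go through `ker ≤ range`. If `v ∈ ker d_V \ range d_V` and
`w ∈ ker d_W \ range d_W`, pick functionals `f`, `g` killing the ranges with `f v ≠ 0 ≠ g w`;
then `f ⊗ g` kills `range D` but not the cycle `v ⊗ w`. Conversely, over a field an acyclic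
`d` with `d² = 0` has a contracting homotopy `h` (`h d + d h = 1`), and in characteristic two
`h ⊗ 1` (or `1 ⊗ h`) is a contracting homotopy for `D`.
-/

open TensorProduct LinearMap

theorem Margolis.subsingleton_iff_ker_le_range {V : Type*} [AddCommGroup V]
    [Module (ZMod 2) V] (d : V →ₗ[ZMod 2] V) :
    Subsingleton (Margolis d) ↔ ker d ≤ range d := by
  rw [Submodule.Quotient.subsingleton_iff, Submodule.comap_subtype_eq_top]

theorem LinearMap.ker_le_range_of_homotopy {R V : Type*} [Ring R] [AddCommGroup V]
    [Module R V] {d h : V →ₗ[R] V} (hh : h ∘ₗ d + d ∘ₗ h = LinearMap.id) :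
    ker d ≤ range d := by
  intro x hx
  refine ⟨h x, ?_⟩
  simpa [show d x = 0 from hx] using congr($hh x)

section Field

variable {K V W : Type*} [Field K] [AddCommGroup V] [Module K V] [AddCommGroup W] [Module K W]

theorem LinearMap.exists_comp_comp_eq_self (d : V →ₗ[K] W) :
    ∃ s : W →ₗ[K] V, d ∘ₗ s ∘ₗ d = d := by
  obtain ⟨r, hr⟩ := d.rangeRestrict.exists_rightInverse_of_surjective d.range_rangeRestrict
  obtain ⟨l, hl⟩ := (range d).subtype.exists_leftInverse_of_injective (range d).ker_subtype
  refine ⟨r ∘ₗ l, ?_⟩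
  calc d ∘ₗ (r ∘ₗ l) ∘ₗ d
      = (range d).subtype ∘ₗ (d.rangeRestrict ∘ₗ r) ∘ₗ (l ∘ₗ (range d).subtype) ∘ₗ
          d.rangeRestrict := rfl
    _ = d := by rw [hr, hl]; rfl

theorem LinearMap.exists_homotopy_of_ker_le_range (d : V →ₗ[K] V) (hd : d ∘ₗ d = 0)
    (hk : ker d ≤ range d) : ∃ h : V →ₗ[K] V, h ∘ₗ d + d ∘ₗ h = LinearMap.id := by
  obtain ⟨s, hs⟩ := d.exists_comp_comp_eq_self
  -- `1 - s d` lands in `ker d = range d`, on which `1 - d s` vanishes.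
  have hvanish : (1 - d * s) * (1 - s * d) = 0 := by
    ext x
    obtain ⟨y, hy⟩ := hk (show x - s (d x) ∈ ker d by
      simpa [sub_eq_zero] using congr($hs x).symm)
    simpa [← hy, sub_eq_zero] using congr($hs y).symm
  refine ⟨s - s * s * d, ?_⟩
  calc (s - s * s * d) * d + d * (s - s * s * d)
      = 1 - (1 - d * s) * (1 - s * d) - s * s * (d * d) := by noncomm_ring
    _ = 1 := by rw [hvanish, show d * d = 0 from hd]; simp

theorem LinearMap.exists_dual_ne_zero_comp_eq_zero {x : V} (d : W →ₗ[K] V)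
    (hx : x ∉ range d) : ∃ f : Module.Dual K V, f x ≠ 0 ∧ f ∘ₗ d = 0 := by
  obtain ⟨f, hfx, hf⟩ := Submodule.exists_dual_map_eq_bot_of_notMem hx inferInstance
  refine ⟨f, hfx, ?_⟩
  rwa [← range_eq_bot, range_comp]

theorem TensorProduct.tmul_notMem_range_map_add_map {v : V} {w : W}
    (dV : V →ₗ[K] V) (dW : W →ₗ[K] W) (hv : v ∉ range dV) (hw : w ∉ range dW) :
    v ⊗ₜ w ∉ range (map dV LinearMap.id + map LinearMap.id dW) := by
  obtain ⟨f, hfv, hf⟩ := exists_dual_ne_zero_comp_eq_zero dV hv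
  obtain ⟨g, hgw, hg⟩ := exists_dual_ne_zero_comp_eq_zero dW hw
  have hvanish :
      dualDistrib K V W (f ⊗ₜ g) ∘ₗ (map dV LinearMap.id + map LinearMap.id dW) = 0 := by
    ext a b
    simp [← LinearMap.comp_apply, hf, hg]
  rintro ⟨z, hz⟩
  apply mul_ne_zero hfv hgw
  simpa [hz] using congr($hvanish z)

end Field

section CharTwo

variable {R V W : Type*} [CommRing R] [CharP R 2]
  [AddCommGroup V] [Module R V] [AddCommGroup W] [Module R W]

theorem TensorProduct.map_homotopy_left {dV h : V →ₗ[R] V} (dW : W →ₗ[R] W)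
    (hh : h ∘ₗ dV + dV ∘ₗ h = LinearMap.id) :
    map h LinearMap.id ∘ₗ (map dV LinearMap.id + map LinearMap.id dW) +
      (map dV LinearMap.id + map LinearMap.id dW) ∘ₗ map h LinearMap.id = LinearMap.id := by
  rw [comp_add, add_comp, ← map_comp, ← map_comp, ← map_comp, ← map_comp, add_add_add_comm,
    ← map_add_left, hh]
  simp only [id_comp, comp_id, map_id]
  rw [← two_smul R, CharTwo.two_eq_zero, zero_smul, add_zero]

theorem TensorProduct.map_homotopy_right (dV : V →ₗ[R] V) {dW h : W →ₗ[R] W}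
    (hh : h ∘ₗ dW + dW ∘ₗ h = LinearMap.id) :
    map LinearMap.id h ∘ₗ (map dV LinearMap.id + map LinearMap.id dW) +
      (map dV LinearMap.id + map LinearMap.id dW) ∘ₗ map LinearMap.id h = LinearMap.id := by
  rw [comp_add, add_comp, ← map_comp, ← map_comp, ← map_comp, ← map_comp, add_add_add_comm,
    ← map_add_right, hh]
  simp only [id_comp, comp_id, map_id]
  rw [← two_smul R, CharTwo.two_eq_zero, zero_smul, zero_add]

end CharTwo

open TensorProduct in
/-- The Margolis homology of a tensor product vanishes iff that of one of the
factors does. -/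
theorem margolis_tensor_acyclic_iff {V W : Type*} [AddCommGroup V] [Module (ZMod 2) V]
    [AddCommGroup W] [Module (ZMod 2) W]
    (dV : V →ₗ[ZMod 2] V) (dW : W →ₗ[ZMod 2] W)
    (hV : dV ∘ₗ dV = 0) (hW : dW ∘ₗ dW = 0) :
    Subsingleton
      (Margolis (TensorProduct.map dV LinearMap.id + TensorProduct.map LinearMap.id dW))
      ↔ Subsingleton (Margolis dV) ∨ Subsingleton (Margolis dW) := by
  simp only [Margolis.subsingleton_iff_ker_le_range]
  constructor
  · contrapose!
    rintro ⟨hV', hW'⟩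
    obtain ⟨v, hv, hv'⟩ := SetLike.not_le_iff_exists.mp hV'
    obtain ⟨w, hw, hw'⟩ := SetLike.not_le_iff_exists.mp hW'
    refine SetLike.not_le_iff_exists.mpr
      ⟨v ⊗ₜ w, ?_, tmul_notMem_range_map_add_map dV dW hv' hw'⟩
    simp [show dV v = 0 from hv, show dW w = 0 from hw]
  · rintro (hV' | hW')
    · obtain ⟨h, hh⟩ := dV.exists_homotopy_of_ker_le_range hV hV'
      exact ker_le_range_of_homotopy (map_homotopy_left dW hh)
    · obtain ⟨h, hh⟩ := dW.exists_homotopy_of_ker_le_range hW hW'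
      exact ker_le_range_of_homotopy (map_homotopy_right dV hh)
end

section
/- (The cohomology of an exterior algebra on one generator is a polynomial algebra; dimension statement.) Regard 𝔽₂ as an R-module via the quotient map R → R/(x) ≅ 𝔽₂. Then for every integer n ≥ 0, the 𝔽₂-vector space Ext^n_R(𝔽₂, 𝔽₂) is one-dimensional. -/
/-!
Multiplication by `x` is exact on `R` (its kernel is `xR`), so `⋯ → R → R → R → 𝔽₂`, with every
differential multiplication by `x`, is a free resolution of `𝔽₂`. Applying `Hom_R(-, 𝔽₂)` kills
every differential, since `x` acts by zero on `𝔽₂`; hence `Ext^n_R(𝔽₂, 𝔽₂) ≅ Hom_R(R, 𝔽₂) ≅ 𝔽₂`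
in every degree.
-/

noncomputable section

open Polynomial CategoryTheory

/-- The exterior algebra `R = 𝔽₂[X]/(X²)` on one generator over `𝔽₂`. -/
abbrev ExtR : Type := AdjoinRoot (X ^ 2 : (ZMod 2)[X])

/-- The class `x` of `X` in `R = 𝔽₂[X]/(X²)`; it satisfies `x² = 0`. -/
abbrev xcl : ExtR := AdjoinRoot.root _

/-- The field `𝔽₂`, regarded as an `R`-module via the quotient map `R → R/(x) ≅ 𝔽₂`. -/
abbrev F2R : Type := ExtR ⧸ Ideal.span {xcl}

universe u

lemma isTorsionBy_quotient_span_singleton {A : Type u} [CommRing A] (a : A) :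
    Module.IsTorsionBy A (A ⧸ Ideal.span {a}) a :=
  (Module.isTorsionBy_quotient_iff _ _).mpr fun r =>
    Ideal.mul_mem_right r _ (Ideal.mem_span_singleton_self a)

namespace ModuleCat

variable {A : Type u} [CommRing A] (a : A)

def periodicComplex (ha : a * a = 0) : ChainComplex (ModuleCat.{u} A) ℕ :=
  ChainComplex.of (fun _ => ModuleCat.of A A) (fun _ => ofHom (LinearMap.mulLeft A a))
    (fun _ => by ext; simp [ha])

variable {a}

variable (ha : a * a = 0)

lemma periodicComplex_d_succ (n : ℕ) :
    (periodicComplex a ha).d (n + 1) n = ofHom (LinearMap.mulLeft A a) := by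
  simp [periodicComplex]

instance (n : ℕ) : Projective ((periodicComplex a ha).X n) :=
  inferInstanceAs (Projective (ModuleCat.of A A))

lemma periodicComplex_exactAt_succ (hann : ∀ r : A, a * r = 0 → a ∣ r) (n : ℕ) :
    (periodicComplex a ha).ExactAt (n + 1) := by
  rw [HomologicalComplex.exactAt_iff' _ (n + 2) (n + 1) n (by simp) (by simp)]
  dsimp only [HomologicalComplex.sc', HomologicalComplex.shortComplexFunctor']
  rw [ShortComplex.moduleCat_exact_iff]
  simp only [periodicComplex_d_succ]
  intro (r : A) (hr : a * r = 0)
  obtain ⟨s, rfl⟩ := hann r hr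
  exact ⟨s, rfl⟩

lemma mulLeft_comp_mkQ_span_singleton :
    ofHom (LinearMap.mulLeft A a) ≫ ofHom (Ideal.span {a}).mkQ = 0 :=
  hom_ext <| LinearMap.ext fun (r : A) =>
    isTorsionBy_quotient_span_singleton a (x := Submodule.Quotient.mk r)

lemma exact_mulLeft_mkQ_span_singleton :
    (ShortComplex.mk _ _ (mulLeft_comp_mkQ_span_singleton (a := a))).Exact := by
  rw [ShortComplex.moduleCat_exact_iff]
  intro (r : A) hr
  obtain ⟨s, rfl⟩ := Ideal.mem_span_singleton.mp ((Submodule.Quotient.mk_eq_zero _).mp hr)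
  exact ⟨s, rfl⟩

variable (hann : ∀ r : A, a * r = 0 → a ∣ r)

def periodicResolution : ProjectiveResolution (of A (A ⧸ Ideal.span {a})) where
  complex := periodicComplex a ha
  π := (ChainComplex.toSingle₀Equiv _ _).symm
    ⟨ofHom (Ideal.span {a}).mkQ, by
      rw [periodicComplex_d_succ]
      exact mulLeft_comp_mkQ_span_singleton⟩
  quasiIso := ⟨fun n => by
    cases n with
    | zero =>
      rw [ChainComplex.quasiIsoAt₀_iff, ShortComplex.quasiIso_iff_of_zeros' _ rfl rfl rfl]
      exact ⟨exact_mulLeft_mkQ_span_singleton,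
        (epi_iff_surjective _).2 (Submodule.mkQ_surjective _)⟩
    | succ n =>
      rw [quasiIsoAt_iff_exactAt' (hL := ChainComplex.exactAt_succ_single_obj ..)]
      exact periodicComplex_exactAt_succ ha hann n⟩

variable {M : Type u} [AddCommGroup M] [Module A M]

lemma periodicComplex_linearYonedaObj_d (hM : Module.IsTorsionBy A M a) (i j : ℕ) :
    ((periodicComplex a ha).linearYonedaObj A (of A M)).d i j = 0 := by
  by_cases hij : j = i + 1
  · subst hij
    ext (f : of A A ⟶ of A M) : 2
    change (periodicComplex a ha).d (i + 1) i ≫ f = 0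
    rw [periodicComplex_d_succ]
    refine hom_ext (LinearMap.ext fun (r : A) => ?_)
    change f (a * r) = 0
    rw [← smul_eq_mul, map_smul, hM]
  · exact HomologicalComplex.shape _ _ _ (fun h => hij h.symm)

def extQuotientSpanSingletonEquiv (hM : Module.IsTorsionBy A M a) (n : ℕ) :
    ((Ext A (ModuleCat A) n).obj (Opposite.op (of A (A ⧸ Ideal.span {a})))).obj (of A M)
      ≃ₗ[A] M :=
  (((periodicResolution ha hann).isoExt n (of A M)) ≪≫
    (ShortComplex.LeftHomologyData.ofZeros _ (periodicComplex_linearYonedaObj_d ha hM _ _)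
      (periodicComplex_linearYonedaObj_d ha hM _ _)).homologyIso).toLinearEquiv ≪≫ₗ
    homLinearEquiv.trans (LinearMap.ringLmapEquivSelf A A M)

end ModuleCat

lemma xcl_mul_self : xcl * xcl = 0 := by
  rw [xcl, ← sq, ← AdjoinRoot.mk_X, ← map_pow, AdjoinRoot.mk_self]

lemma xcl_dvd_of_mul_eq_zero {r : ExtR} (hr : xcl * r = 0) : xcl ∣ r := by
  obtain ⟨p, rfl⟩ := AdjoinRoot.mk_surjective r
  rw [xcl, ← AdjoinRoot.mk_X, ← map_mul, AdjoinRoot.mk_eq_zero, sq,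
    mul_dvd_mul_iff_left X_ne_zero] at hr
  obtain ⟨q, rfl⟩ := hr
  exact ⟨AdjoinRoot.mk _ q, by rw [xcl, map_mul, AdjoinRoot.mk_X]⟩

def f2rEquiv : F2R ≃+* ZMod 2 :=
  (Ideal.quotEquivOfEq (R := ExtR) (J := (Ideal.span {X}).map (AdjoinRoot.mk (X ^ 2)))
    (by rw [Ideal.map_span, Set.image_singleton, AdjoinRoot.mk_X])).trans <|
  (DoubleQuot.quotQuotEquivQuotOfLE
    (Ideal.span_singleton_le_span_singleton.2 (dvd_pow_self X two_ne_zero))).trans <|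
  (Ideal.quotEquivOfEq (by rw [map_zero, sub_zero])).trans
    (quotientSpanXSubCAlgEquiv (0 : ZMod 2)).toRingEquiv

/-- The cohomology of the exterior algebra on one generator is a polynomial algebra:
for every `n ≥ 0`, the `𝔽₂`-vector space `Ext^n_R(𝔽₂, 𝔽₂)` is one-dimensional, i.e.
additively (equivalently, `𝔽₂`-linearly) isomorphic to `𝔽₂`. -/
theorem ext_f2_f2_one_dimensional (n : ℕ) :
    Nonempty ((((Ext ExtR (ModuleCat ExtR) n).obj
        (Opposite.op (ModuleCat.of ExtR F2R))).obj (ModuleCat.of ExtR F2R))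
      ≃+ ZMod 2) :=
  ⟨(ModuleCat.extQuotientSpanSingletonEquiv xcl_mul_self (fun _ => xcl_dvd_of_mul_eq_zero)
    (isTorsionBy_quotient_span_singleton xcl) n).toAddEquiv.trans f2rEquiv.toAddEquiv⟩
end
end

section
/- (Margolis homology detects freeness over the exterior algebra on one generator.) Let M be any R-module. Then M is a free R-module if and only if its Margolis homology vanishes, i.e. if and only if ker(x· : M → M) = range(x· : M → M). -/
noncomputable section

open Polynomial

/-- Multiplication by `x`, as a linear endomorphism of an `R`-module `M`. -/
def mulX (M : Type*) [AddCommGroup M] [Module ExtR M] : M →ₗ[ExtR] M :=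
  LinearMap.lsmul ExtR M xcl

/-! Over a field `K`, let `A` be a `K`-algebra spanned by `1` and an element `x` with `x² = 0`.
If `ker x = im x` on `M`, pick a `K`-complement `W` of `ker x`: then `M = x W ⊕ W`, and
`x` maps `W` isomorphically onto `x W`, so a `K`-basis of `W` is an `A`-basis of `M`.
Conversely `ker x = im x` holds on `A = K[X]/(X²)` itself, hence coordinatewise on free modules. -/

namespace AdjoinRoot

variable {K : Type*} [CommRing K]

theorem root_X_sq_mul_self : root (X ^ 2 : K[X]) * root (X ^ 2) = 0 := by
  rw [← sq, ← mk_X, ← map_pow, mk_self]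

theorem exists_eq_algebraMap_add_smul_root_X_sq [Nontrivial K] (c : AdjoinRoot (X ^ 2 : K[X])) :
    ∃ a b : K, c = algebraMap K _ a + b • root (X ^ 2) := by
  induction c using induction_on with
  | ih p =>
    have hdeg : (p %ₘ X ^ 2).natDegree ≤ 1 := by
      simpa [Nat.lt_succ_iff] using
        natDegree_modByMonic_lt p (monic_X_pow 2) fun h => by simpa using congrArg natDegree h
    refine ⟨(p %ₘ X ^ 2).coeff 0, (p %ₘ X ^ 2).coeff 1, ?_⟩
    rw [← mk_leftInverse (monic_X_pow 2) (mk _ p), modByMonicHom_mk,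
      eq_X_add_C_of_natDegree_le_one hdeg]
    simp [Algebra.smul_def, add_comm]

theorem exists_root_X_sq_mul_eq [IsDomain K] {c : AdjoinRoot (X ^ 2 : K[X])}
    (hc : root (X ^ 2) * c = 0) : ∃ d : AdjoinRoot (X ^ 2 : K[X]), root (X ^ 2) * d = c := by
  induction c using induction_on with
  | ih p =>
    rw [← mk_X, ← map_mul, mk_eq_zero, sq, mul_dvd_mul_iff_left X_ne_zero] at hc
    obtain ⟨q, rfl⟩ := hc
    exact ⟨mk _ q, by rw [← mk_X, ← map_mul]⟩

end AdjoinRoot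

open Submodule LinearMap

section

variable {A M : Type*} [CommRing A] [AddCommGroup M] [Module A M] {x : A}

theorem range_lsmul_le_ker_of_mul_self_eq_zero (hx : x * x = 0) :
    range (lsmul A M x) ≤ ker (lsmul A M x) := by
  rintro _ ⟨m, rfl⟩
  simp [← mul_smul, hx]

theorem ker_lsmul_le_range_of_free [Module.Free A M]
    (hA : ∀ c : A, x * c = 0 → ∃ d, x * d = c) :
    ker (lsmul A M x) ≤ range (lsmul A M x) := by
  intro m hm
  let b := Module.Free.chooseBasis A M
  have hcoord : ∀ i, x * b.repr m i = 0 := fun i => by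
    simpa using congrArg (b.repr · i) (mem_ker.mp hm)
  choose d hd using fun i => hA _ (hcoord i)
  refine ⟨∑ i ∈ (b.repr m).support, d i • b i, ?_⟩
  conv_rhs => rw [← b.linearCombination_repr m]
  simp only [lsmul_apply, Finset.smul_sum, smul_smul, hd, Finsupp.linearCombination_apply,
    Finsupp.sum]

variable {K : Type*} [Field K] [Algebra K A] [Module K M] [IsScalarTower K A M]

theorem linearIndependent_of_smul_injOn (hx : x * x = 0)
    (hA : ∀ c : A, ∃ a b : K, c = algebraMap K A a + b • x) {W : Submodule K M}
    (hW : ∀ w ∈ W, x • w = 0 → w = 0) {ι : Type*} {v : ι → M}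
    (hv : LinearIndependent K v) (hvW : ∀ i, v i ∈ W) : LinearIndependent A v := by
  rw [linearIndependent_iff']
  intro s g hg i hi
  choose a b hab using fun j => hA (g j)
  have hsplit :
      ∑ j ∈ s, g j • v j = ∑ j ∈ s, a j • v j + x • ∑ j ∈ s, b j • v j := by
    rw [Finset.smul_sum, ← Finset.sum_add_distrib]
    refine Finset.sum_congr rfl fun j _ => ?_
    rw [hab j, add_smul, algebraMap_smul, smul_assoc, smul_comm]
  have hmem : ∀ c : ι → K, ∑ j ∈ s, c j • v j ∈ W := fun c =>
    W.sum_mem fun j _ => W.smul_mem _ (hvW j)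
  have ha : ∑ j ∈ s, a j • v j = 0 := hW _ (hmem a) <| by
    simpa [hsplit, smul_add, ← mul_smul, hx] using congrArg (x • ·) hg
  have hb : ∑ j ∈ s, b j • v j = 0 := hW _ (hmem b) <| by
    rwa [hsplit, ha, zero_add] at hg
  rw [hab i, linearIndependent_iff'.mp hv s a ha i hi, linearIndependent_iff'.mp hv s b hb i hi,
    map_zero, zero_smul, add_zero]

theorem span_eq_top_of_codisjoint_ker (h : ker (lsmul A M x) ≤ range (lsmul A M x))
    {W : Submodule K M} (hW : Codisjoint ((ker (lsmul A M x)).restrictScalars K) W) :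
    span A (W : Set M) = ⊤ := by
  have hdecomp : ∀ m : M, ∃ k w, x • k = 0 ∧ w ∈ W ∧ k + w = m := fun m => by
    obtain ⟨k, hk, w, hw, rfl⟩ := mem_sup.mp (hW.eq_top ▸ mem_top : m ∈ _ ⊔ W)
    exact ⟨k, w, hk, hw, rfl⟩
  refine eq_top_iff.mpr fun m _ => ?_
  obtain ⟨k, w, hk, hw, rfl⟩ := hdecomp m
  obtain ⟨n, rfl⟩ := h hk
  obtain ⟨k', w', hk', hw', rfl⟩ := hdecomp n
  rw [lsmul_apply, smul_add, hk', zero_add]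
  exact add_mem (smul_mem _ _ (subset_span hw')) (subset_span hw)

end

theorem free_of_ker_lsmul_le_range {K A M : Type*} [Field K] [CommRing A] [Algebra K A]
    [AddCommGroup M] [Module A M] {x : A} (hx : x * x = 0)
    (hA : ∀ c : A, ∃ a b : K, c = algebraMap K A a + b • x)
    (h : ker (lsmul A M x) ≤ range (lsmul A M x)) : Module.Free A M := by
  let _ : Module K M := Module.compHom M (algebraMap K A)
  have : IsScalarTower K A M := IsScalarTower.of_algebraMap_smul fun _ _ => rfl
  obtain ⟨W, hW⟩ := Submodule.exists_isCompl ((ker (lsmul A M x)).restrictScalars K)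
  obtain ⟨B, hBW, hBspan, hBli⟩ := exists_linearIndependent K (W : Set M)
  have hli : LinearIndependent A ((↑) : B → M) :=
    linearIndependent_of_smul_injOn hx hA
      (fun w hw hxw => disjoint_def.mp hW.disjoint w hxw hw) hBli fun i => hBW i.2
  have hspan : ⊤ ≤ span A (Set.range ((↑) : B → M)) := by
    rw [Subtype.range_coe, ← span_eq_top_of_codisjoint_ker h hW.codisjoint]
    refine span_le.mpr fun w hw => span_le_restrictScalars K A B ?_
    rw [hBspan, span_eq]
    exact hw
  exact Module.Free.of_basis (Module.Basis.mk hli hspan)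

/-- Margolis homology detects freeness over the exterior algebra on one generator:
an `R`-module `M` is free iff `ker(x· : M → M) = range(x· : M → M)`. -/
theorem free_iff_margolis_acyclic (M : Type*) [AddCommGroup M] [Module ExtR M] :
    Module.Free ExtR M ↔ LinearMap.ker (mulX M) = LinearMap.range (mulX M) := by
  have hx : xcl * xcl = 0 := AdjoinRoot.root_X_sq_mul_self
  refine ⟨fun _ => ?_, fun h => ?_⟩
  · exact le_antisymm (ker_lsmul_le_range_of_free fun _ => AdjoinRoot.exists_root_X_sq_mul_eq)
      (range_lsmul_le_ker_of_mul_self_eq_zero hx)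
  · exact free_of_ker_lsmul_le_range hx AdjoinRoot.exists_eq_algebraMap_add_smul_root_X_sq h.le
end
end

section
/- (Free, projective and injective modules coincide over the exterior algebra on one generator, an instance of the Frobenius property of finite dimensional Hopf algebras.) For any R-module M, the following are equivalent: (i) M is a projective R-module; (ii) M is an injective R-module; (iii) M is a free R-module. -/
noncomputable section

open Polynomial

/-!
Over `Λ = K[ε]/(ε²)`, for any field `K`, each of the three properties is equivalent to exactness of
`M --ε--> M --ε--> M`. This sequence is exact for `M = Λ`, and exactness passes to flat modules
by tensoring and to injective modules because `ann ε = (ε)` makes `r ↦ r • m` factor through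
`Λ ⧸ ann ε ≅ (ε)` whenever `ε • m = 0`. Conversely, if `ker ε = ε M`, then Baer's criterion holds
because the only ideals of `Λ` are `0`, `(ε)` and `Λ`, and a `K`-basis of a complement of `ker ε`
is a `Λ`-basis of `M`: writing scalars as `c + d ε`, a relation splits into `P + ε Q = 0` with `P`,
`Q` in the complement, and multiplying by `ε` forces `P = Q = 0`.
-/

def IsSMulExact {R : Type*} [CommRing R] (a : R) (M : Type*) [AddCommGroup M] [Module R M] :
    Prop :=
  Function.Exact (DistribSMul.toLinearMap R M a) (DistribSMul.toLinearMap R M a)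

namespace IsSMulExact

universe u v

variable {R : Type u} [CommRing R] {a : R} {M : Type v} [AddCommGroup M] [Module R M]

theorem exists_smul_eq (h : IsSMulExact a M) {m : M} (hm : a • m = 0) : ∃ m', a • m' = m :=
  (h m).1 hm

theorem mul_self_eq_zero (h : IsSMulExact a R) : a * a = 0 :=
  (h a).2 ⟨1, mul_one a⟩

theorem of_mul_self_eq_zero (ha : a * a = 0) (h : ∀ m : M, a • m = 0 → ∃ m', a • m' = m) :
    IsSMulExact a M := fun m =>
  ⟨h m, by rintro ⟨m', rfl⟩; simp [smul_smul, ha]⟩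

variable (M) in
theorem of_flat [Module.Flat R M] (h : IsSMulExact a R) : IsSMulExact a M := by
  have hM := Module.Flat.lTensor_exact M h
  rw [LinearMap.lTensor_smul_action] at hM
  refine Function.Exact.of_ladder_linearEquiv_of_exact (e₁ := TensorProduct.rid R M)
    (e₂ := TensorProduct.rid R M) (e₃ := TensorProduct.rid R M) ?_ ?_ hM <;>
  exact LinearMap.ext fun x => (map_smul _ a x).symm

theorem of_injective [Small.{v} R] [Module.Injective R M] (h : IsSMulExact a R) :
    IsSMulExact a M := by
  refine of_mul_self_eq_zero h.mul_self_eq_zero fun m hm => ?_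
  let μ := DistribSMul.toLinearMap R R a
  have hker : LinearMap.ker μ ≤ LinearMap.ker (LinearMap.toSpanSingleton R M m) := by
    intro r hr
    obtain ⟨s, rfl⟩ := h.exists_smul_eq hr
    simp [mul_comm a s, mul_smul, hm]
  obtain ⟨φ, hφ⟩ := Module.Injective.extension_property R M _ _
    ((LinearMap.ker μ).liftQ μ le_rfl)
    (by rw [← LinearMap.ker_eq_bot]; exact Submodule.ker_liftQ_eq_bot _ _ le_rfl le_rfl)
    ((LinearMap.ker μ).liftQ _ hker)
  refine ⟨φ 1, ?_⟩
  have := LinearMap.congr_fun hφ (Submodule.Quotient.mk 1)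
  simp only [LinearMap.comp_apply, Submodule.liftQ_apply] at this
  simpa [μ, ← map_smul] using this

end IsSMulExact

namespace AdjoinRoot

variable {K : Type*} [Field K]

local notation "Λ" => AdjoinRoot (X ^ 2 : K[X])
local notation "ε" => AdjoinRoot.root (X ^ 2 : K[X])

theorem root_X_sq_mul_self_s7 : ε * ε = (0 : Λ) := by
  rw [← sq, ← mk_X, ← map_pow, mk_self]

theorem root_X_sq_ne_zero : ε ≠ (0 : Λ) := by
  rw [← mk_X, Ne, mk_eq_zero]
  intro h
  simpa using natDegree_le_of_dvd h X_ne_zero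

theorem exists_eq_algebraMap_add_smul_root_X_sq_s7 (a : Λ) :
    ∃ c d : K, algebraMap K Λ c + d • ε = a := by
  obtain ⟨q, rfl⟩ := mk_surjective a
  have hmonic : (X ^ 2 : K[X]).Monic := monic_X_pow 2
  have hdeg : (q %ₘ X ^ 2).natDegree ≤ 1 := by
    have := natDegree_modByMonic_lt q hmonic (fun h => by simpa using congrArg natDegree h)
    rw [natDegree_X_pow] at this
    omega
  refine ⟨(q %ₘ X ^ 2).coeff 0, (q %ₘ X ^ 2).coeff 1, ?_⟩
  conv_rhs => rw [← mk_leftInverse hmonic (mk _ q), modByMonicHom_mk,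
    eq_X_add_C_of_natDegree_le_one hdeg]
  rw [map_add, map_mul, mk_X, mk_C, mk_C, Algebra.smul_def, algebraMap_eq]
  ring

theorem root_X_sq_mul_algebraMap_add_smul (c d : K) :
    ε * (algebraMap K Λ c + d • ε) = c • ε := by
  rw [mul_add, mul_smul_comm, root_X_sq_mul_self_s7, smul_zero, add_zero, Algebra.smul_def, mul_comm]

theorem isUnit_algebraMap_add_smul_root_X_sq {c : K} (hc : c ≠ 0) (d : K) :
    IsUnit (algebraMap K Λ c + d • ε) := by
  have hnil : IsNilpotent ((c⁻¹ * d) • ε) :=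
    IsNilpotent.smul ⟨2, (pow_two _).trans root_X_sq_mul_self_s7⟩ _
  have : algebraMap K Λ c + d • ε = algebraMap K Λ c * (1 + (c⁻¹ * d) • ε) := by
    rw [mul_add, mul_one, mul_smul_comm, ← Algebra.smul_def, smul_smul, mul_right_comm,
      inv_mul_cancel₀ hc, one_mul]
  rw [this]
  exact ((IsUnit.mk0 c hc).map _).mul hnil.isUnit_one_add

theorem mem_span_root_X_sq_of_mul_eq_zero {y : Λ} (hy : ε * y = 0) : y ∈ Ideal.span {ε} := by
  obtain ⟨c, d, rfl⟩ := exists_eq_algebraMap_add_smul_root_X_sq_s7 y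
  rw [root_X_sq_mul_algebraMap_add_smul, smul_eq_zero] at hy
  rcases hy.resolve_right root_X_sq_ne_zero with rfl
  rw [map_zero, zero_add]
  exact Submodule.smul_of_tower_mem _ _ (Ideal.mem_span_singleton_self _)

theorem ideal_eq_bot_or_eq_span_root_X_sq_or_eq_top (I : Ideal Λ) :
    I = ⊥ ∨ I = Ideal.span {ε} ∨ I = ⊤ := by
  by_cases htop : ∃ y ∈ I, y ∉ Ideal.span {ε}
  · obtain ⟨y, hyI, hy⟩ := htop
    obtain ⟨c, d, rfl⟩ := exists_eq_algebraMap_add_smul_root_X_sq_s7 y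
    have hc : c ≠ 0 := by
      rintro rfl
      rw [map_zero, zero_add] at hy
      exact hy (Submodule.smul_of_tower_mem _ _ (Ideal.mem_span_singleton_self _))
    exact Or.inr (Or.inr (I.eq_top_of_isUnit_mem hyI (isUnit_algebraMap_add_smul_root_X_sq hc d)))
  push Not at htop
  by_cases hε : ε ∈ I
  · exact Or.inr (Or.inl (le_antisymm htop ((Ideal.span_singleton_le_iff_mem I).2 hε)))
  refine Or.inl ((Submodule.eq_bot_iff I).2 fun y hy => ?_)
  obtain ⟨b, rfl⟩ := Ideal.mem_span_singleton'.1 (htop y hy)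
  obtain ⟨c, d, rfl⟩ := exists_eq_algebraMap_add_smul_root_X_sq_s7 b
  rw [mul_comm, root_X_sq_mul_algebraMap_add_smul] at hy ⊢
  obtain rfl | hc := eq_or_ne c 0
  · exact zero_smul _ _
  · exact absurd (inv_smul_smul₀ hc ε ▸ I.smul_of_tower_mem c⁻¹ hy) hε

theorem isSMulExact_root_X_sq : IsSMulExact ε Λ :=
  IsSMulExact.of_mul_self_eq_zero root_X_sq_mul_self_s7 fun _ hy =>
    (Ideal.mem_span_singleton'.1 (mem_span_root_X_sq_of_mul_eq_zero hy)).imp fun _ h =>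
      (mul_comm _ _).trans h

variable {M : Type*} [AddCommGroup M] [Module (AdjoinRoot (X ^ 2 : K[X])) M]

theorem baer_of_isSMulExact (h : IsSMulExact ε M) : Module.Baer Λ M := by
  intro I g
  rcases ideal_eq_bot_or_eq_span_root_X_sq_or_eq_top I with rfl | rfl | rfl
  · refine ⟨0, fun y hy => ?_⟩
    rw [Ideal.mem_bot] at hy
    subst hy
    exact (map_zero g).symm
  · have hε := Ideal.mem_span_singleton_self ε
    obtain ⟨m, hm⟩ := h.exists_smul_eq (m := g ⟨ε, hε⟩) <| by
      rw [← map_smul]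
      convert map_zero g
      exact Subtype.ext (root_X_sq_mul_self_s7 (K := K))
    refine ⟨LinearMap.toSpanSingleton Λ M m, fun y hy => ?_⟩
    obtain ⟨b, rfl⟩ := Ideal.mem_span_singleton'.1 hy
    rw [LinearMap.toSpanSingleton_apply, mul_smul, hm, ← map_smul]
    rfl
  · refine ⟨LinearMap.toSpanSingleton Λ M (g ⟨1, trivial⟩), fun y hy => ?_⟩
    rw [LinearMap.toSpanSingleton_apply, ← map_smul]
    congr 1
    exact Subtype.ext (mul_one y)

section Restriction

variable [Module K M] [IsScalarTower K (AdjoinRoot (X ^ 2 : K[X])) M]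

theorem linearIndependent_of_disjoint_ker {ι : Type*} {v : ι → M} (hv : LinearIndependent K v)
    (hdisj : Disjoint (Submodule.span K (Set.range v))
      (LinearMap.ker (DistribSMul.toLinearMap K M ε))) :
    LinearIndependent Λ v := by
  rw [linearIndependent_iff'] at hv ⊢
  intro s g hg i hi
  choose c d hcd using fun j => exists_eq_algebraMap_add_smul_root_X_sq_s7 (g j)
  set P := ∑ j ∈ s, c j • v j
  set Q := ∑ j ∈ s, d j • v j
  have hPQ : P + ε • Q = 0 := by
    rw [← hg, Finset.smul_sum, ← Finset.sum_add_distrib]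
    refine Finset.sum_congr rfl fun j _ => ?_
    rw [← hcd, add_smul, algebraMap_smul, smul_assoc, smul_comm]
  have hmem : ∀ e : ι → K, ∑ j ∈ s, e j • v j ∈ Submodule.span K (Set.range v) := fun e =>
    Submodule.sum_mem _ fun j _ => Submodule.smul_mem _ _ (Submodule.subset_span ⟨j, rfl⟩)
  have hP : P = 0 := Submodule.disjoint_def.1 hdisj P (hmem c) <| by
    calc ε • P = ε • (P + ε • Q) := by
          rw [smul_add, smul_smul, root_X_sq_mul_self_s7, zero_smul, add_zero]
      _ = 0 := by rw [hPQ, smul_zero]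
  rw [hP, zero_add] at hPQ
  have hQ : Q = 0 := Submodule.disjoint_def.1 hdisj Q (hmem d) hPQ
  rw [← hcd, hv s c hP i hi, hv s d hQ i hi, map_zero, zero_smul, add_zero]

theorem top_le_span_of_codisjoint_ker (h : IsSMulExact ε M) {ι : Type*} {v : ι → M}
    (hcodisj : Codisjoint (Submodule.span K (Set.range v))
      (LinearMap.ker (DistribSMul.toLinearMap K M ε))) :
    ⊤ ≤ Submodule.span Λ (Set.range v) := by
  have hsum (m : M) : ∃ p ∈ Submodule.span K (Set.range v), ∃ k, ε • k = 0 ∧ p + k = m :=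
    Submodule.mem_sup.1 (hcodisj.eq_top ▸ Submodule.mem_top)
  intro m _
  obtain ⟨p, hp, k, hk, rfl⟩ := hsum m
  obtain ⟨m', rfl⟩ := h.exists_smul_eq hk
  obtain ⟨p', hp', k', hk', rfl⟩ := hsum m'
  rw [smul_add, hk', add_zero]
  exact add_mem (Submodule.span_le_restrictScalars K Λ _ hp)
    (Submodule.smul_mem _ _ (Submodule.span_le_restrictScalars K Λ _ hp'))

end Restriction

theorem free_of_isSMulExact (h : IsSMulExact ε M) : Module.Free Λ M := by
  let _ : Module K M := .compHom M (algebraMap K Λ)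
  have : IsScalarTower K Λ M := IsScalarTower.of_compHom K Λ M
  obtain ⟨V, hV⟩ := Submodule.exists_isCompl (LinearMap.ker (DistribSMul.toLinearMap K M ε))
  obtain ⟨b, -, hspan, hli⟩ := exists_linearIndependent K (V : Set M)
  rw [Submodule.span_eq, ← Subtype.range_coe (s := b)] at hspan
  exact Module.Free.of_basis <| Module.Basis.mk (linearIndependent_of_disjoint_ker hli
    (hspan ▸ hV.symm.disjoint)) (top_le_span_of_codisjoint_ker h (hspan ▸ hV.symm.codisjoint))

end AdjoinRoot

/-- Over `R = 𝔽₂[X]/(X²)` (a Frobenius algebra), projective, injective and free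
modules coincide. -/
theorem projective_iff_injective_iff_free (M : Type) [AddCommGroup M] [Module ExtR M] :
    (Module.Projective ExtR M ↔ Module.Injective ExtR M) ∧
    (Module.Injective ExtR M ↔ Module.Free ExtR M) := by
  have projective_injective (hp : Module.Projective ExtR M) : Module.Injective ExtR M :=
    (AdjoinRoot.baer_of_isSMulExact
      (AdjoinRoot.isSMulExact_root_X_sq.of_flat M)).injective
  have injective_free (hi : Module.Injective ExtR M) : Module.Free ExtR M :=
    AdjoinRoot.free_of_isSMulExact (AdjoinRoot.isSMulExact_root_X_sq.of_injective)
  have free_projective (hf : Module.Free ExtR M) : Module.Projective ExtR M := inferInstance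
  exact ⟨⟨projective_injective, fun hi => free_projective (injective_free hi)⟩,
    ⟨injective_free, fun hf => projective_injective (free_projective hf)⟩⟩
end
end

section
/- (The generic point of the spectrum of the stable module category of 𝒜(1): algebraic content.) The polynomial α² + v₀²β is irreducible in the polynomial ring 𝔽₂[v₀, α, β]; consequently, in the ring R = 𝔽₂[v₀, η, α, β]/(v₀η, η³, ηα, α² + v₀²β), the ideal (η) generated by the class of η is a prime ideal, and it equals the nilradical of R. -/
noncomputable section

open MvPolynomial

/-- The relations ideal `(v₀η, η³, ηα, α² + v₀²β)` defining `H^{*,*}(𝒜(1))`,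
with variables `0 ↦ v₀`, `1 ↦ η`, `2 ↦ α`, `3 ↦ β`. -/
abbrev relA1 : Ideal (MvPolynomial (Fin 4) (ZMod 2)) :=
  Ideal.span {X 0 * X 1, X 1 ^ 3, X 1 * X 2, X 2 ^ 2 + X 0 ^ 2 * X 3}

/-- The cohomology ring `H^{*,*}(𝒜(1)) = 𝔽₂[v₀, η, α, β]/(v₀η, η³, ηα, α² + v₀²β)`. -/
abbrev CohA1 : Type := MvPolynomial (Fin 4) (ZMod 2) ⧸ relA1

/-!
Viewed as a polynomial in `α` over `𝔽₂[v₀, β]`, `α² + v₀²β` is the monic quadratic `α² - (-v₀²β)`.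
A monic quadratic `X² - c` over a domain factors only as `(X - a)(X + a)` with `c = a²`, and `-v₀²β`
is not a square because its degree in `β` is odd. So `(α² + v₀²β)` is prime in the UFD
`𝔽₂[v₀, α, β]`, hence so is `(η, α² + v₀²β)` in `𝔽₂[v₀, η, α, β]`, its quotient being
`𝔽₂[v₀, α, β]/(α² + v₀²β)`. This ideal contains every relation of `R`, and its image in `R`
is `(η)`. Finally `η³ = 0`, so `(η)` lies in the nilradical, which lies in every prime ideal.
-/

namespace Polynomial

variable {R : Type*} [CommRing R]

theorem irreducible_X_sq_sub_C_of_not_isSquare [NoZeroDivisors R] {c : R} (hc : ¬IsSquare c) :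
    Irreducible (X ^ 2 - C c) := by
  have : Nontrivial R := not_subsingleton_iff_nontrivial.mp fun _ ↦ hc ⟨0, Subsingleton.elim _ _⟩
  by_contra h
  obtain ⟨c₁, c₂, h0, h1⟩ :=
    ((monic_X_pow_sub_C c two_ne_zero).not_irreducible_iff_exists_add_mul_eq_coeff
      natDegree_X_pow_sub_C).mp h
  simp only [coeff_sub, coeff_X_pow, OfNat.zero_ne_ofNat, ↓reduceIte, coeff_C_zero, zero_sub,
    OfNat.one_ne_ofNat, coeff_C_succ, sub_self] at h0 h1
  rw [eq_neg_of_add_eq_zero_right h1.symm] at h0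
  exact hc ⟨c₁, by simpa using h0⟩

theorem isPrime_span_C_X_sub_C_iff (x y : R) :
    (Ideal.span {C x, X - C y} : Ideal R[X]).IsPrime ↔ (Ideal.span {x} : Ideal R).IsPrime := by
  simpa only [Ideal.Quotient.isDomain_iff_prime] using
    (quotientSpanCXSubCAlgEquiv x y).toMulEquiv.isDomain_iff

end Polynomial

namespace MvPolynomial

variable {R σ : Type*}

theorem even_degreeOf_of_isSquare [CommSemiring R] [NoZeroDivisors R] {p : MvPolynomial σ R}
    (hp : IsSquare p) (i : σ) : Even (degreeOf i p) := by
  obtain ⟨q, rfl⟩ := hp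
  rcases eq_or_ne q 0 with rfl | hq
  · simp
  · rw [degreeOf_mul_eq hq hq]
    exact Even.add_self _

theorem not_isSquare_neg_X_sq_mul_X [CommRing R] [IsDomain R] {i j : σ} (hij : i ≠ j) :
    ¬IsSquare (-(X i ^ 2 * X j) : MvPolynomial σ R) := by
  classical
  intro h
  have h_even := even_degreeOf_of_isSquare h j
  rw [degreeOf_neg, degreeOf_mul_eq (pow_ne_zero _ (X_ne_zero i)) (X_ne_zero j),
    degreeOf_pow_eq _ _ _ (X_ne_zero i), degreeOf_X, degreeOf_X, if_neg hij.symm, if_pos rfl]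
    at h_even
  simp at h_even

variable (R) in
def finSuccSwapEquiv [CommSemiring R] (n : ℕ) :
    MvPolynomial (Fin (n + 2)) R ≃ₐ[R] Polynomial (MvPolynomial (Fin (n + 1)) R) :=
  (renameEquiv R (Equiv.swap 0 1)).trans (finSuccEquiv R (n + 1))

section finSuccSwapEquiv

variable [CommSemiring R] {n : ℕ}

@[simp]
theorem finSuccSwapEquiv_X_zero : finSuccSwapEquiv R n (X 0) = Polynomial.C (X 0) := by
  rw [finSuccSwapEquiv, AlgEquiv.trans_apply, renameEquiv_apply, rename_X, Equiv.swap_apply_left,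
    ← Fin.succ_zero_eq_one, finSuccEquiv_X_succ]

@[simp]
theorem finSuccSwapEquiv_X_one : finSuccSwapEquiv R n (X 1) = Polynomial.X := by
  rw [finSuccSwapEquiv, AlgEquiv.trans_apply, renameEquiv_apply, rename_X, Equiv.swap_apply_right,
    finSuccEquiv_X_zero]

@[simp]
theorem finSuccSwapEquiv_X_succ_succ (k : Fin n) :
    finSuccSwapEquiv R n (X k.succ.succ) = Polynomial.C (X k.succ) := by
  have hk : k.succ.succ ≠ 1 := by
    rw [← Fin.succ_zero_eq_one, Ne, Fin.succ_inj]
    exact Fin.succ_ne_zero k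
  rw [finSuccSwapEquiv, AlgEquiv.trans_apply, renameEquiv_apply, rename_X,
    Equiv.swap_apply_of_ne_of_ne (Fin.succ_ne_zero _) hk, finSuccEquiv_X_succ]

end finSuccSwapEquiv

section

variable [CommRing R] [IsDomain R]

theorem irreducible_X_one_sq_add_X_zero_sq_mul_X_two :
    Irreducible (X 1 ^ 2 + X 0 ^ 2 * X 2 : MvPolynomial (Fin 3) R) := by
  have h := Polynomial.irreducible_X_sq_sub_C_of_not_isSquare
    (not_isSquare_neg_X_sq_mul_X (R := R) (zero_ne_one : (0 : Fin 2) ≠ 1))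
  have he : finSuccSwapEquiv R 1 (X 1 ^ 2 + X 0 ^ 2 * X 2) =
      Polynomial.X ^ 2 - Polynomial.C (-(X 0 ^ 2 * X 1)) := by
    rw [show (2 : Fin 3) = (0 : Fin 1).succ.succ from rfl]
    simp only [map_add, map_pow, map_mul, map_neg, sub_neg_eq_add, finSuccSwapEquiv_X_zero,
      finSuccSwapEquiv_X_one, finSuccSwapEquiv_X_succ_succ]
    rfl
  rw [← he] at h
  exact (MulEquiv.irreducible_iff (finSuccSwapEquiv R 1).toMulEquiv).mp h

theorem isPrime_span_X_one_X_two_sq_add_X_zero_sq_mul_X_three [UniqueFactorizationMonoid R] :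
    (Ideal.span {X 1, X 2 ^ 2 + X 0 ^ 2 * X 3} : Ideal (MvPolynomial (Fin 4) R)).IsPrime := by
  have hg : (Ideal.span {X 1 ^ 2 + X 0 ^ 2 * X 2} : Ideal (MvPolynomial (Fin 3) R)).IsPrime :=
    (Ideal.span_singleton_prime irreducible_X_one_sq_add_X_zero_sq_mul_X_two.ne_zero).2
      irreducible_X_one_sq_add_X_zero_sq_mul_X_two.prime
  have hC := (Polynomial.isPrime_span_C_X_sub_C_iff _ 0).2 hg
  rw [map_zero, sub_zero] at hC
  let e : MvPolynomial (Fin 4) R ≃+* Polynomial (MvPolynomial (Fin 3) R) := finSuccSwapEquiv R 2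
  have hmap : (Ideal.span {X 1, X 2 ^ 2 + X 0 ^ 2 * X 3}).map e =
      Ideal.span {Polynomial.C (X 1 ^ 2 + X 0 ^ 2 * X 2), Polynomial.X} := by
    rw [Ideal.map_span, Set.image_pair, Set.pair_comm,
      show (3 : Fin 4) = (1 : Fin 2).succ.succ from rfl,
      show (2 : Fin 4) = (0 : Fin 2).succ.succ from rfl]
    simp only [e, AlgEquiv.coe_ringEquiv, map_add, map_pow, map_mul, finSuccSwapEquiv_X_zero,
      finSuccSwapEquiv_X_one, finSuccSwapEquiv_X_succ_succ]
    rfl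
  rw [← Ideal.comap_map_of_bijective _ e.bijective (I := Ideal.span _), hmap]
  exact Ideal.comap_isPrime _ _

end

end MvPolynomial

theorem Ideal.span_singleton_eq_nilradical {R : Type*} [CommSemiring R] {a : R}
    (hp : (Ideal.span {a}).IsPrime) (ha : IsNilpotent a) : Ideal.span {a} = nilradical R :=
  le_antisymm ((Ideal.span_singleton_le_iff_mem _).2 ha) (nilradical_le_prime _)

theorem relA1_le_span_X_one_X_two_sq_add_X_zero_sq_mul_X_three :
    relA1 ≤ Ideal.span {X 1, X 2 ^ 2 + X 0 ^ 2 * X 3} := by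
  have h1 : (X 1 : MvPolynomial (Fin 4) (ZMod 2)) ∈ Ideal.span {X 1, X 2 ^ 2 + X 0 ^ 2 * X 3} :=
    Ideal.subset_span (Set.mem_insert _ _)
  rw [Ideal.span_le]
  rintro _ (rfl | rfl | rfl | rfl)
  · exact Ideal.mul_mem_left _ _ h1
  · exact Ideal.pow_mem_of_mem _ h1 3 three_pos
  · exact Ideal.mul_mem_right _ _ h1
  · exact Ideal.subset_span (Set.mem_insert_of_mem _ rfl)

namespace CohA1

theorem isPrime_span_mk_X_one :
    (Ideal.span {Ideal.Quotient.mk relA1 (X 1)} : Ideal CohA1).IsPrime := by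
  have hmap : (Ideal.span {X 1, X 2 ^ 2 + X 0 ^ 2 * X 3}).map (Ideal.Quotient.mk relA1) =
      Ideal.span {Ideal.Quotient.mk relA1 (X 1)} := by
    rw [Ideal.map_span, Set.image_pair, Ideal.Quotient.eq_zero_iff_mem.2
        (show X 2 ^ 2 + X 0 ^ 2 * X 3 ∈ relA1 from Ideal.subset_span (by simp)),
      Set.pair_comm, Ideal.span_insert_zero]
  have := isPrime_span_X_one_X_two_sq_add_X_zero_sq_mul_X_three (R := ZMod 2)
  rw [← hmap]
  exact Ideal.map_isPrime_of_surjective Ideal.Quotient.mk_surjective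
    (by rw [Ideal.mk_ker]; exact relA1_le_span_X_one_X_two_sq_add_X_zero_sq_mul_X_three)

theorem isNilpotent_mk_X_one : IsNilpotent (Ideal.Quotient.mk relA1 (X 1)) :=
  ⟨3, by rw [← map_pow, Ideal.Quotient.eq_zero_iff_mem]; exact Ideal.subset_span (by simp)⟩

end CohA1

/-- `α² + v₀²β` is irreducible in `𝔽₂[v₀, α, β]` (variables `0 ↦ v₀`, `1 ↦ α`, `2 ↦ β`);
consequently, in `R = 𝔽₂[v₀, η, α, β]/(v₀η, η³, ηα, α² + v₀²β)` the ideal `(η)` is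
prime, and it equals the nilradical of `R`. -/
theorem a1_eta_prime_and_nilradical :
    Irreducible (X 1 ^ 2 + X 0 ^ 2 * X 2 : MvPolynomial (Fin 3) (ZMod 2)) ∧
    (Ideal.span {Ideal.Quotient.mk relA1 (X 1)} : Ideal CohA1).IsPrime ∧
    (Ideal.span {Ideal.Quotient.mk relA1 (X 1)} : Ideal CohA1) = nilradical CohA1 :=
  ⟨irreducible_X_one_sq_add_X_zero_sq_mul_X_two, CohA1.isPrime_span_mk_X_one,
    Ideal.span_singleton_eq_nilradical CohA1.isPrime_span_mk_X_one CohA1.isNilpotent_mk_X_one⟩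
end
end

section
/- (The spectrum of the stable module category of 𝒜(1) has exactly three points: algebraic content.) Equip R = 𝔽₂[v₀, η, α, β]/(v₀η, η³, ηα, α² + v₀²β) with the ℕ×ℕ-grading determined by deg v₀ = (1,1), deg η = (1,2), deg α = (3,7), deg β = (4,12) (all four relations are bihomogeneous, so this grading descends to R). Then the set of prime ideals of R that are homogeneous with respect to this grading and do not contain the irrelevant ideal (v₀, η, α, β) is exactly { (η), (η, v₀, α), (η, α, β) }, where (η, v₀, α) is the radical of the ideal (η, v₀). In particular there are exactly three such primes, and (η) is contained in both of the others. -/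
noncomputable section

open MvPolynomial

/-- The bidegrees of the generators: `v₀ ↦ (1,1)`, `η ↦ (1,2)`, `α ↦ (3,7)`,
`β ↦ (4,12)`. -/
abbrev bideg : Fin 4 → ℕ × ℕ := ![(1, 1), (1, 2), (3, 7), (4, 12)]

/-- The image in `CohA1` of a polynomial. -/
abbrev clA1 (p : MvPolynomial (Fin 4) (ZMod 2)) : CohA1 := Ideal.Quotient.mk relA1 p

/-- An ideal of `CohA1` is (bi)homogeneous if it contains the classes of all the
bihomogeneous components (for the `ℕ×ℕ`-grading determined by `bideg`) of every
polynomial whose class it contains. -/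
def IsBihomogeneous (J : Ideal CohA1) : Prop :=
  ∀ g : MvPolynomial (Fin 4) (ZMod 2), clA1 g ∈ J →
    ∀ n : ℕ × ℕ, clA1 (weightedHomogeneousComponent bideg n g) ∈ J

/-- The irrelevant ideal `(v₀, η, α, β)` of `CohA1`. -/
abbrev irrelevantA1 : Ideal CohA1 :=
  Ideal.span {clA1 (X 0), clA1 (X 1), clA1 (X 2), clA1 (X 3)}

/-!
Every prime `J` of `R` contains `η` (as `η³ = 0`), and contains `α` iff it contains `v₀` or `β`
(as `α² = v₀²β`). If `J` contains `v₀` but not `β`, it contains `(η, v₀, α)`, modulo which every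
bihomogeneous element is a multiple of a power of `β`; so a bihomogeneous `J` equals
`(η, v₀, α)`. The case of `β ∈ J`, `v₀ ∉ J` is symmetric. If `J` contains neither, then modulo `η`
every bihomogeneous element is a multiple of the monomial `v₀^a α^e β^d` (`e ≤ 1`) of its
bidegree, which lies outside `J`; so `J = (η)`.

The ideals `(η, v₀, α)` and `(η, α, β)` are kernels of evaluations into polynomial rings. For `(η)`
we use `v₀ ↦ s², α ↦ s²t, β ↦ t²` into `𝔽₂[s, t]`: modulo `(η)` every element is
`r₀(v₀, β) + α r₁(v₀, β)`, which is sent to `r₀² + t (s r₁)²`, and `∂/∂t` shows this vanishes only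
if `r₀ = r₁ = 0`.
-/

namespace MvPolynomial

variable {σ R : Type*} [CommRing R]

theorem sub_aeval_mem_of_forall_X_sub_mem {Q : Ideal (MvPolynomial σ R)}
    {v : σ → MvPolynomial σ R} (hv : ∀ i, X i - v i ∈ Q) (p : MvPolynomial σ R) :
    p - aeval v p ∈ Q := by
  have hmk : (Ideal.Quotient.mkₐ R Q).comp (aeval v) = Ideal.Quotient.mkₐ R Q :=
    algHom_ext fun i => by simpa [Ideal.Quotient.eq] using Q.neg_mem (hv i)
  rw [← Ideal.Quotient.eq]
  exact (DFunLike.congr_fun hmk p).symm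

theorem eq_zero_of_sq_add_X_mul_sq [IsDomain R] [CharP R 2] {a b : MvPolynomial σ R} (i : σ)
    (h : a ^ 2 + X i * b ^ 2 = 0) : a = 0 ∧ b = 0 := by
  have hsq : ∀ c : MvPolynomial σ R, pderiv i (c ^ 2) = 0 := fun c => by
    rw [Derivation.leibniz_pow, two_nsmul, CharTwo.add_self_eq_zero]
  have hb : b ^ 2 = 0 := by
    simpa [Derivation.leibniz, hsq] using congrArg (pderiv i) h
  have ha : a ^ 2 = 0 := by simpa [hb] using h
  exact ⟨pow_eq_zero_iff two_ne_zero |>.mp ha, pow_eq_zero_iff two_ne_zero |>.mp hb⟩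

variable {M : Type*} [AddCommMonoid M] (w : σ → M)

theorem exists_sub_smul_mem_of_isWeightedHomogeneous {Q : Ideal (MvPolynomial σ R)}
    (ρ : M → MvPolynomial σ R)
    (hred : ∀ m, ∃ c : R, monomial m 1 - c • ρ (Finsupp.weight w m) ∈ Q)
    {h : MvPolynomial σ R} {n : M} (hh : IsWeightedHomogeneous w h n) :
    ∃ c : R, h - c • ρ n ∈ Q := by
  choose c hc using hred
  refine ⟨∑ m ∈ h.support, coeff m h * c m, ?_⟩
  have hsum : h - (∑ m ∈ h.support, coeff m h * c m) • ρ n =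
      ∑ m ∈ h.support, coeff m h • (monomial m 1 - c m • ρ (Finsupp.weight w m)) := by
    nth_rewrite 1 [h.as_sum]
    rw [Finset.sum_smul, ← Finset.sum_sub_distrib]
    refine Finset.sum_congr rfl fun m hm => ?_
    rw [hh (mem_support_iff.mp hm), smul_sub, smul_monomial, smul_eq_mul, mul_one, smul_smul]
  rw [hsum]
  exact Ideal.sum_mem _ fun m _ => Submodule.smul_of_tower_mem _ _ (hc m)

theorem le_of_forall_monomial_sub_smul_mem {K : Type*} [Field K]
    {P Q : Ideal (MvPolynomial σ K)}
    (hP : ∀ g ∈ P, ∀ n, weightedHomogeneousComponent w n g ∈ P) (hQP : Q ≤ P)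
    (ρ : M → MvPolynomial σ K) (hρ : ∀ n, ρ n ∉ P)
    (hred : ∀ m, ∃ c : K, monomial m 1 - c • ρ (Finsupp.weight w m) ∈ Q) : P ≤ Q := by
  intro g hg
  rw [← sum_weightedHomogeneousComponent w g,
    finsum_eq_sum _ (weightedHomogeneousComponent_finsupp g)]
  refine Ideal.sum_mem _ fun n _ => ?_
  obtain ⟨c, hc⟩ := exists_sub_smul_mem_of_isWeightedHomogeneous w ρ hred
    (weightedHomogeneousComponent_isWeightedHomogeneous n g)
  have hcP : c • ρ n ∈ P := by simpa using sub_mem (hP g hg n) (hQP hc)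
  obtain rfl | hc0 := eq_or_ne c 0
  · simpa using hc
  · exact absurd (by simpa [hc0] using Submodule.smul_of_tower_mem _ c⁻¹ hcP) (hρ n)

end MvPolynomial

namespace CohA1

abbrev PolyA1 : Type := MvPolynomial (Fin 4) (ZMod 2)

abbrev 𝔭η : Ideal CohA1 := Ideal.span {clA1 (X 1)}

abbrev 𝔭ηv₀α : Ideal CohA1 := Ideal.span {clA1 (X 1), clA1 (X 0), clA1 (X 2)}

abbrev 𝔭ηαβ : Ideal CohA1 := Ideal.span {clA1 (X 1), clA1 (X 2), clA1 (X 3)}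

theorem clA1_X1_pow_three : clA1 (X 1) ^ 3 = 0 :=
  Ideal.Quotient.eq_zero_iff_mem.mpr (Ideal.subset_span (by simp))

theorem clA1_X2_sq : clA1 (X 2) ^ 2 = clA1 (X 0) ^ 2 * clA1 (X 3) := by
  simp only [← map_pow, ← map_mul, Ideal.Quotient.eq, CharTwo.sub_eq_add]
  exact Ideal.subset_span (by simp)

theorem clA1_monomial (m : Fin 4 →₀ ℕ) :
    clA1 (monomial m 1) =
      clA1 (X 0) ^ m 0 * clA1 (X 1) ^ m 1 * clA1 (X 2) ^ m 2 * clA1 (X 3) ^ m 3 := by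
  rw [monomial_eq, Finsupp.prod_fintype _ _ (fun _ => pow_zero _), Fin.prod_univ_four]
  simp

theorem clA1_X0_pow_mul_X2_pow_mul_X3_pow (a c d : ℕ) :
    clA1 (X 0) ^ a * clA1 (X 2) ^ c * clA1 (X 3) ^ d =
      clA1 (X 0) ^ (a + 2 * (c / 2)) * clA1 (X 2) ^ (c % 2) * clA1 (X 3) ^ (d + c / 2) := by
  conv_lhs => rw [← Nat.div_add_mod c 2, pow_add, pow_mul, clA1_X2_sq]
  ring

theorem weight_bideg (m : Fin 4 →₀ ℕ) :
    Finsupp.weight bideg m =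
      (m 0 + m 1 + 3 * m 2 + 4 * m 3, m 0 + 2 * m 1 + 7 * m 2 + 12 * m 3) := by
  simp [Finsupp.weight_apply, Finsupp.sum_fintype, Fin.sum_univ_four, bideg, Prod.ext_iff,
    mul_comm]

def lift {B : Type*} [CommRing B] [Algebra (ZMod 2) B] (v : Fin 4 → B)
    (hv : v 0 * v 1 = 0 ∧ v 1 ^ 3 = 0 ∧ v 1 * v 2 = 0 ∧ v 2 ^ 2 + v 0 ^ 2 * v 3 = 0) :
    CohA1 →+* B :=
  Ideal.Quotient.lift relA1 (aeval v).toRingHom fun _ ha => by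
    refine (Ideal.span_le (I := RingHom.ker (aeval v).toRingHom)).mpr ?_ ha
    rintro _ (rfl | rfl | rfl | rfl) <;> simp [hv.1, hv.2.1, hv.2.2.1, hv.2.2.2]

@[simp]
theorem lift_clA1 {B : Type*} [CommRing B] [Algebra (ZMod 2) B] (v : Fin 4 → B) (hv)
    (p : PolyA1) : lift v hv (clA1 p) = aeval v p :=
  rfl

def ψη : CohA1 →+* MvPolynomial (Fin 2) (ZMod 2) :=
  lift ![X 0 ^ 2, 0, X 0 ^ 2 * X 1, X 1 ^ 2] ⟨by simp, by simp, by simp, by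
    simp only [Matrix.cons_val]
    linear_combination
      (X 0 ^ 4 * X 1 ^ 2) * CharTwo.two_eq_zero (R := MvPolynomial (Fin 2) (ZMod 2))⟩

def ψηv₀α : CohA1 →+* PolyA1 := lift ![0, 0, 0, X 3] (by simp)

def ψηαβ : CohA1 →+* PolyA1 := lift ![X 0, 0, 0, 0] (by simp)

theorem ker_lift_le {v : Fin 4 → PolyA1} (hv) {J : Ideal CohA1}
    (hJ : ∀ i, clA1 (X i - v i) ∈ J) : RingHom.ker (lift v hv) ≤ J := by
  intro x hx
  obtain ⟨p, rfl⟩ := Ideal.Quotient.mk_surjective x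
  rw [RingHom.mem_ker, lift_clA1] at hx
  have := sub_aeval_mem_of_forall_X_sub_mem (Q := J.comap (Ideal.Quotient.mk relA1)) hJ p
  rwa [hx, sub_zero] at this

theorem ker_ψηv₀α : RingHom.ker ψηv₀α = 𝔭ηv₀α := by
  refine le_antisymm (ker_lift_le _ fun i => ?_) (Ideal.span_le.mpr ?_)
  · fin_cases i <;> simp [Submodule.mem_span_of_mem]
  · rintro _ (rfl | rfl | rfl) <;> simp [ψηv₀α]

theorem ker_ψηαβ : RingHom.ker ψηαβ = 𝔭ηαβ := by
  refine le_antisymm (ker_lift_le _ fun i => ?_) (Ideal.span_le.mpr ?_)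
  · fin_cases i <;> simp [Submodule.mem_span_of_mem]
  · rintro _ (rfl | rfl | rfl) <;> simp [ψηαβ]

theorem exists_normalForm {R : Type*} [CommRing R] {Q : Ideal (MvPolynomial (Fin 4) R)}
    (hη : X 1 ∈ Q) (hα : X 2 ^ 2 - X 0 ^ 2 * X 3 ∈ Q) (p : MvPolynomial (Fin 4) R) :
    ∃ r₀ r₁ : MvPolynomial (Fin 2) R,
      p - (rename ![0, 3] r₀ + X 2 * rename ![0, 3] r₁) ∈ Q := by
  induction p using MvPolynomial.induction_on with
  | C a => exact ⟨C a, 0, by simp⟩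
  | add p q hp hq =>
    obtain ⟨a₀, a₁, ha⟩ := hp
    obtain ⟨b₀, b₁, hb⟩ := hq
    exact ⟨a₀ + b₀, a₁ + b₁, by convert add_mem ha hb using 1; simp only [map_add]; ring⟩
  | mul_X p i hp =>
    obtain ⟨r₀, r₁, hr⟩ := hp
    obtain rfl | rfl | rfl | rfl : i = 0 ∨ i = 1 ∨ i = 2 ∨ i = 3 := by fin_cases i <;> simp
    · refine ⟨r₀ * X 0, r₁ * X 0, ?_⟩
      convert Q.mul_mem_right (X 0) hr using 1
      simp only [map_mul, rename_X, Matrix.cons_val_zero]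
      ring
    · exact ⟨0, 0, by simpa using Q.mul_mem_left p hη⟩
    · refine ⟨X 0 ^ 2 * X 1 * r₁, r₀, ?_⟩
      convert add_mem (Q.mul_mem_right (X 2) hr) (Q.mul_mem_left (rename ![0, 3] r₁) hα) using 1
      simp only [map_mul, map_pow, rename_X, Matrix.cons_val_zero, Matrix.cons_val_one]
      ring
    · refine ⟨r₀ * X 1, r₁ * X 1, ?_⟩
      convert Q.mul_mem_right (X 3) hr using 1
      simp only [map_mul, rename_X, Matrix.cons_val_one, Matrix.cons_val_fin_one]
      ring

theorem ψη_rename (r : MvPolynomial (Fin 2) (ZMod 2)) :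
    ψη (clA1 (rename ![0, 3] r)) = r ^ 2 := by
  have hv : (![X 0 ^ 2, 0, X 0 ^ 2 * X 1, X 1 ^ 2] ∘ ![0, 3] :
      Fin 2 → MvPolynomial (Fin 2) (ZMod 2)) = fun i => X i ^ 2 := by
    funext i; fin_cases i <;> rfl
  rw [ψη, lift_clA1, aeval_rename, hv, ← frobenius_def, MvPolynomial.frobenius_zmod]
  rfl

theorem ker_ψη : RingHom.ker ψη = 𝔭η := by
  have hle : 𝔭η ≤ RingHom.ker ψη := Ideal.span_le.mpr (by simp [ψη])
  refine le_antisymm (fun x hx => ?_) hle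
  obtain ⟨p, rfl⟩ := Ideal.Quotient.mk_surjective x
  obtain ⟨r₀, r₁, hN⟩ := exists_normalForm (Q := 𝔭η.comap (Ideal.Quotient.mk relA1))
    (Ideal.subset_span rfl) (by simp [sub_eq_zero.mpr clA1_X2_sq]) p
  have hN0 := hle hN
  have hα : ψη (clA1 (X 2)) = X 0 ^ 2 * X 1 := by simp [ψη]
  rw [RingHom.mem_ker] at hx hN0
  simp only [map_sub, map_add, map_mul, hx, zero_sub, neg_eq_zero] at hN0
  rw [ψη_rename, ψη_rename, hα] at hN0
  obtain ⟨rfl, h⟩ := eq_zero_of_sq_add_X_mul_sq 1 (a := r₀) (b := X 0 * r₁)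
    (by linear_combination hN0)
  obtain rfl : r₁ = 0 := by simpa [X_ne_zero] using h
  simpa using hN

theorem isPrime_𝔭η : 𝔭η.IsPrime := ker_ψη ▸ RingHom.ker_isPrime ψη

theorem isPrime_𝔭ηv₀α : 𝔭ηv₀α.IsPrime := ker_ψηv₀α ▸ RingHom.ker_isPrime ψηv₀α

theorem isPrime_𝔭ηαβ : 𝔭ηαβ.IsPrime := ker_ψηαβ ▸ RingHom.ker_isPrime ψηαβ

theorem clA1_X0_mem_𝔭ηv₀α : clA1 (X 0) ∈ 𝔭ηv₀α := Ideal.subset_span (by simp)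

theorem clA1_X3_mem_𝔭ηαβ : clA1 (X 3) ∈ 𝔭ηαβ := Ideal.subset_span (by simp)

theorem clA1_X0_notMem_𝔭η : clA1 (X 0) ∉ 𝔭η := by
  simp [← ker_ψη, ψη, X_ne_zero]

theorem clA1_X3_notMem_𝔭η : clA1 (X 3) ∉ 𝔭η := by
  simp [← ker_ψη, ψη, X_ne_zero]

theorem clA1_X3_notMem_𝔭ηv₀α : clA1 (X 3) ∉ 𝔭ηv₀α := by
  simp [← ker_ψηv₀α, ψηv₀α, X_ne_zero]

theorem clA1_X0_notMem_𝔭ηαβ : clA1 (X 0) ∉ 𝔭ηαβ := by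
  simp [← ker_ψηαβ, ψηαβ, X_ne_zero]

theorem not_irrelevantA1_le {J : Ideal CohA1} {i : Fin 4} (h : clA1 (X i) ∉ J) :
    ¬ irrelevantA1 ≤ J :=
  fun hle => h (hle (Ideal.subset_span (by fin_cases i <;> simp)))

theorem 𝔭ηv₀α_eq_radical : 𝔭ηv₀α = (Ideal.span {clA1 (X 1), clA1 (X 0)}).radical := by
  refine le_antisymm (Ideal.span_le.mpr ?_)
    (isPrime_𝔭ηv₀α.radical_le_iff.mpr (Ideal.span_mono (by simp [Set.insert_subset_iff])))
  rintro _ (rfl | rfl | rfl)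
  · exact Ideal.le_radical (Ideal.subset_span (by simp))
  · exact Ideal.le_radical (Ideal.subset_span (by simp))
  · refine ⟨2, ?_⟩
    rw [clA1_X2_sq, pow_two, mul_assoc]
    exact Ideal.mul_mem_right _ _ (Ideal.subset_span (by simp))

section Bihomogeneous

attribute [local instance] MvPolynomial.weightedGradedAlgebra

theorem isBihomogeneous_span_clA1_X (s : Set (Fin 4)) :
    IsBihomogeneous (Ideal.span ((clA1 ∘ X) '' s)) := by
  have hX : ∀ i, IsWeightedHomogeneous bideg (X i : PolyA1) (bideg i) :=
    isWeightedHomogeneous_X (ZMod 2) bideg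
  have hf : IsWeightedHomogeneous bideg (X 2 ^ 2 + X 0 ^ 2 * X 3 : PolyA1) (6, 14) := by
    refine IsWeightedHomogeneous.add ?_ ?_
    · simpa using (hX 2).pow 2
    · simpa using ((hX 0).pow 2).mul (hX 3)
  have hhom : ((Ideal.span ((clA1 ∘ X) '' s)).comap (Ideal.Quotient.mk relA1)).IsHomogeneous
      (weightedHomogeneousSubmodule (ZMod 2) bideg) := by
    rw [Set.image_comp, ← Ideal.map_span,
      Ideal.comap_map_of_surjective _ Ideal.Quotient.mk_surjective, ← RingHom.ker_eq_comap_bot,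
      Ideal.mk_ker]
    refine (Ideal.homogeneous_span _ _ ?_).sup (Ideal.homogeneous_span _ _ ?_)
    · rintro _ ⟨i, -, rfl⟩
      exact ⟨_, hX i⟩
    · rintro _ (rfl | rfl | rfl | rfl)
      exacts [⟨_, (hX 0).mul (hX 1)⟩, ⟨_, (hX 1).pow 3⟩, ⟨_, (hX 1).mul (hX 2)⟩, ⟨_, hf⟩]
  exact fun g hg n => weightedHomogeneousComponent_mem_of_mem _ _ hhom hg n

end Bihomogeneous

theorem isBihomogeneous_𝔭η : IsBihomogeneous 𝔭η := by
  simpa using isBihomogeneous_span_clA1_X {1}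

theorem isBihomogeneous_𝔭ηv₀α : IsBihomogeneous 𝔭ηv₀α := by
  simpa [Set.image_insert_eq] using isBihomogeneous_span_clA1_X {1, 0, 2}

theorem isBihomogeneous_𝔭ηαβ : IsBihomogeneous 𝔭ηαβ := by
  simpa [Set.image_insert_eq] using isBihomogeneous_span_clA1_X {1, 2, 3}

theorem clA1_X2_mem_iff {J : Ideal CohA1} [hJ : J.IsPrime] :
    clA1 (X 2) ∈ J ↔ clA1 (X 0) ∈ J ∨ clA1 (X 3) ∈ J := by
  rw [← hJ.pow_mem_iff_mem 2 two_pos, clA1_X2_sq, hJ.mul_mem_iff_mem_or_mem,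
    hJ.pow_mem_iff_mem 2 two_pos]

theorem clA1_monomial_mem_or {K : Ideal CohA1} {s : Set (Fin 4)}
    (hs : ∀ i ∈ s, clA1 (X i) ∈ K) (m : Fin 4 →₀ ℕ) :
    clA1 (monomial m 1) ∈ K ∨ ∀ i ∈ s, m i = 0 := by
  by_contra! ⟨hK, i, hi, hmi⟩
  exact hK (K.mem_of_dvd (map_dvd _ (X_dvd_monomial.mpr (Or.inr hmi))) (hs i hi))

theorem le_of_isBihomogeneous {J K : Ideal CohA1} (hJ : IsBihomogeneous J) (hKJ : K ≤ J)
    (ρ : ℕ × ℕ → PolyA1) (hρ : ∀ n, clA1 (ρ n) ∉ J)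
    (hred : ∀ m, clA1 (monomial m 1) ∈ K ∨
      clA1 (monomial m 1) = clA1 (ρ (Finsupp.weight bideg m))) :
    J ≤ K := by
  refine (Ideal.comap_le_comap_iff_of_surjective _ Ideal.Quotient.mk_surjective _ _).mp
    (le_of_forall_monomial_sub_smul_mem bideg hJ (Ideal.comap_mono hKJ) ρ hρ fun m => ?_)
  rcases hred m with h | h
  · exact ⟨0, by simpa using h⟩
  · exact ⟨1, by simp [h]⟩

/-- The monomial `v₀^a α^e β^d` with `e ≤ 1` of bidegree `n`: the two degrees differ by
`4e + 8d`. -/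
def normalMonomial (n : ℕ × ℕ) : PolyA1 :=
  X 0 ^ (n.1 - 3 * ((n.2 - n.1) / 4 % 2) - 4 * ((n.2 - n.1) / 8)) *
    X 2 ^ ((n.2 - n.1) / 4 % 2) * X 3 ^ ((n.2 - n.1) / 8)

theorem eq_𝔭η {J : Ideal CohA1} [J.IsPrime] (hb : IsBihomogeneous J)
    (h₁ : clA1 (X 1) ∈ J) (h₀ : clA1 (X 0) ∉ J) (h₃ : clA1 (X 3) ∉ J) : J = 𝔭η := by
  have h₂ : clA1 (X 2) ∉ J := by simp [clA1_X2_mem_iff, h₀, h₃]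
  have hle : 𝔭η ≤ J := Ideal.span_le.mpr (by simpa using h₁)
  refine le_antisymm (le_of_isBihomogeneous hb hle normalMonomial (fun n => ?_) fun m => ?_) hle
  · simp only [normalMonomial, map_mul, map_pow]
    exact J.primeCompl.mul_mem (J.primeCompl.mul_mem (pow_mem h₀ _) (pow_mem h₂ _))
      (pow_mem h₃ _)
  · rcases clA1_monomial_mem_or (K := 𝔭η) (s := {1}) (by simp) m with h | h
    · exact Or.inl h
    · right
      rw [clA1_monomial, weight_bideg, h 1 rfl, pow_zero, mul_one,
        clA1_X0_pow_mul_X2_pow_mul_X3_pow]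
      simp only [normalMonomial, map_mul, map_pow]
      congr 3 <;> omega

theorem eq_𝔭ηv₀α {J : Ideal CohA1} [J.IsPrime] (hb : IsBihomogeneous J)
    (h₁ : clA1 (X 1) ∈ J) (h₀ : clA1 (X 0) ∈ J) (h₃ : clA1 (X 3) ∉ J) : J = 𝔭ηv₀α := by
  have h₂ : clA1 (X 2) ∈ J := clA1_X2_mem_iff.mpr (Or.inl h₀)
  have hle : 𝔭ηv₀α ≤ J := Ideal.span_le.mpr (by simp [Set.insert_subset_iff, *])
  refine le_antisymm (le_of_isBihomogeneous hb hle (fun n => X 3 ^ (n.1 / 4))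
    (fun n => by simp only [map_pow]; exact J.primeCompl.pow_mem h₃ _) fun m => ?_) hle
  rcases clA1_monomial_mem_or (K := 𝔭ηv₀α) (s := {0, 1, 2})
    (by rintro _ (rfl | rfl | rfl) <;> exact Ideal.subset_span (by simp)) m with h | h
  · exact Or.inl h
  · right
    simp [clA1_monomial, weight_bideg, h 0 (by simp), h 1 (by simp), h 2 (by simp)]

theorem eq_𝔭ηαβ {J : Ideal CohA1} [J.IsPrime] (hb : IsBihomogeneous J)
    (h₁ : clA1 (X 1) ∈ J) (h₀ : clA1 (X 0) ∉ J) (h₃ : clA1 (X 3) ∈ J) : J = 𝔭ηαβ := by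
  have h₂ : clA1 (X 2) ∈ J := clA1_X2_mem_iff.mpr (Or.inr h₃)
  have hle : 𝔭ηαβ ≤ J := Ideal.span_le.mpr (by simp [Set.insert_subset_iff, *])
  refine le_antisymm (le_of_isBihomogeneous hb hle (fun n => X 0 ^ n.1)
    (fun n => by simp only [map_pow]; exact J.primeCompl.pow_mem h₀ _) fun m => ?_) hle
  rcases clA1_monomial_mem_or (K := 𝔭ηαβ) (s := {1, 2, 3})
    (by rintro _ (rfl | rfl | rfl) <;> exact Ideal.subset_span (by simp)) m with h | h
  · exact Or.inl h
  · right
    simp [clA1_monomial, weight_bideg, h 1 (by simp), h 2 (by simp), h 3 (by simp)]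

theorem eq_of_isPrime_of_isBihomogeneous {J : Ideal CohA1} [hJ : J.IsPrime]
    (hb : IsBihomogeneous J) (hirr : ¬ irrelevantA1 ≤ J) :
    J = 𝔭η ∨ J = 𝔭ηv₀α ∨ J = 𝔭ηαβ := by
  have h₁ : clA1 (X 1) ∈ J := hJ.mem_of_pow_mem 3 (clA1_X1_pow_three ▸ J.zero_mem)
  by_cases h₀ : clA1 (X 0) ∈ J <;> by_cases h₃ : clA1 (X 3) ∈ J
  · refine absurd (Ideal.span_le.mpr ?_) hirr
    simp [Set.insert_subset_iff, clA1_X2_mem_iff, *]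
  · exact Or.inr (Or.inl (eq_𝔭ηv₀α hb h₁ h₀ h₃))
  · exact Or.inr (Or.inr (eq_𝔭ηαβ hb h₁ h₀ h₃))
  · exact Or.inl (eq_𝔭η hb h₁ h₀ h₃)

end CohA1

open CohA1

/-- The spectrum of the stable module category of `𝒜(1)` has exactly three points:
the bihomogeneous prime ideals of `R = 𝔽₂[v₀, η, α, β]/(v₀η, η³, ηα, α² + v₀²β)`
not containing the irrelevant ideal are exactly `(η)`, `(η, v₀, α)` and `(η, α, β)`;
these are pairwise distinct, `(η, v₀, α)` is the radical of `(η, v₀)`, and `(η)` is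
contained in each of the two others. -/
theorem spc_a1_three_points :
    {J : Ideal CohA1 | J.IsPrime ∧ IsBihomogeneous J ∧ ¬ irrelevantA1 ≤ J} =
      {Ideal.span {clA1 (X 1)},
       Ideal.span {clA1 (X 1), clA1 (X 0), clA1 (X 2)},
       Ideal.span {clA1 (X 1), clA1 (X 2), clA1 (X 3)}} ∧
    (Ideal.span {clA1 (X 1), clA1 (X 0), clA1 (X 2)} : Ideal CohA1) =
      (Ideal.span {clA1 (X 1), clA1 (X 0)} : Ideal CohA1).radical ∧
    (Ideal.span {clA1 (X 1)} : Ideal CohA1) ≠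
      Ideal.span {clA1 (X 1), clA1 (X 0), clA1 (X 2)} ∧
    (Ideal.span {clA1 (X 1)} : Ideal CohA1) ≠
      Ideal.span {clA1 (X 1), clA1 (X 2), clA1 (X 3)} ∧
    (Ideal.span {clA1 (X 1), clA1 (X 0), clA1 (X 2)} : Ideal CohA1) ≠
      Ideal.span {clA1 (X 1), clA1 (X 2), clA1 (X 3)} ∧
    (Ideal.span {clA1 (X 1)} : Ideal CohA1) ≤
      Ideal.span {clA1 (X 1), clA1 (X 0), clA1 (X 2)} ∧
    (Ideal.span {clA1 (X 1)} : Ideal CohA1) ≤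
      Ideal.span {clA1 (X 1), clA1 (X 2), clA1 (X 3)} := by

  refine ⟨?_, 𝔭ηv₀α_eq_radical,
    (ne_of_mem_of_not_mem' clA1_X0_mem_𝔭ηv₀α clA1_X0_notMem_𝔭η).symm,
    (ne_of_mem_of_not_mem' clA1_X3_mem_𝔭ηαβ clA1_X3_notMem_𝔭η).symm,
    ne_of_mem_of_not_mem' clA1_X0_mem_𝔭ηv₀α clA1_X0_notMem_𝔭ηαβ,
    Ideal.span_mono (by simp), Ideal.span_mono (by simp)⟩
  ext J
  simp only [Set.mem_ofPred_eq, Set.mem_insert_iff, Set.mem_singleton_iff]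
  constructor
  · rintro ⟨_, hb, hirr⟩
    exact eq_of_isPrime_of_isBihomogeneous hb hirr
  · rintro (rfl | rfl | rfl)
    · exact ⟨isPrime_𝔭η, isBihomogeneous_𝔭η, not_irrelevantA1_le clA1_X3_notMem_𝔭η⟩
    · exact ⟨isPrime_𝔭ηv₀α, isBihomogeneous_𝔭ηv₀α, not_irrelevantA1_le clA1_X3_notMem_𝔭ηv₀α⟩
    · exact ⟨isPrime_𝔭ηαβ, isBihomogeneous_𝔭ηαβ, not_irrelevantA1_le clA1_X0_notMem_𝔭ηαβ⟩
end
end
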